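/- Every cartesian dynamical system embeds as a rewriting model: given G : X^d → X^d, f : X^d → X, and initial state x₀ ∈ X^d, there exist a signature Σ (with constants a₁,...,a_d, a unary symbol ι, and d-ary symbols σ₀,...,σ_d), a rewrite rule l = σ₀(v₁,...,v_d) ↦ r = σ₀(σ₁(v₁,...,v_d),...,σ_d(v₁,...,v_d)), an initial ground term t₀ = σ₀(a₁,...,a_d), and a Σ-algebra structure c on X (interpreting σ₀ as f, σᵢ as πᵢ ∘ G, ι as id, aᵢ as the i-th coordinate of x₀) such that cata(c)(R_ε^n(t₀)) = f(G^n(x₀)) for all n ∈ ℕ. -/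
import Mathlib

universe u

inductive Tm (S : ℕ → Type u) (V : Type u) : Type u where
  | var : V → Tm S V
  | op : {n : ℕ} → S n → (Fin n → Tm S V) → Tm S V

namespace Tm
variable {S : ℕ → Type u} {V W : Type u}

/-- homomorphic extension of a substitution -/
def subst (σ : V → Tm S W) : Tm S V → Tm S W
  | var v => σ v
  | op f ts => op f (fun i => subst σ (ts i))

/-- evaluation (catamorphism) of a ground term in a Σ-algebra `(X, c)` -/
def cata {X : Type u} (c : ∀ n, S n → (Fin n → X) → X) : Tm S PEmpty → X
  | var v => v.elim
  | op (n := n) f ts => c n f (fun i => cata c (ts i))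

open Classical in
/-- the rewriting function `R_ε` at the root position for the rule `(l, r)`:
if `t = σ̂(l)` for some substitution `σ`, replace `t` by `σ̂(r)` -/
noncomputable def rewriteRoot (l r : Tm S V) (t : Tm S PEmpty) : Tm S PEmpty :=
  if h : ∃ σ : V → Tm S PEmpty, t = subst σ l then subst (Classical.choose h) r else t

end Tm

/-- the signature with constants `a₁,…,a_d` (arity 0), a unary symbol `ι`, and
`d`-ary symbols `σ₀,…,σ_d` -/
inductive Sig (d : ℕ) : ℕ → Type where
  | const : Fin d → Sig d 0
  | iota : Sig d 1
  | sig : Fin (d + 1) → Sig d d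

/-- the Σ-algebra structure on `X` interpreting `σ₀` as `f`, `σᵢ` as `πᵢ ∘ G`,
`ι` as the identity, and `aᵢ` as the `i`-th coordinate of `x₀` -/
def dynAlg {d : ℕ} {X : Type} (G : (Fin d → X) → (Fin d → X)) (f : (Fin d → X) → X)
    (x₀ : Fin d → X) : ∀ n, Sig d n → (Fin n → X) → X
  | _, Sig.const i, _ => x₀ i
  | _, Sig.iota, ys => ys 0
  | _, Sig.sig j, ys => Fin.cases (f ys) (fun i => G ys i) j

/-- the left-hand side `l = σ₀(v₁,…,v_d)` of the rewrite rule -/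
def lhs (d : ℕ) : Tm (Sig d) (Fin d) :=
  Tm.op (Sig.sig 0) (fun i => Tm.var i)

/-- the right-hand side `r = σ₀(σ₁(v₁,…,v_d),…,σ_d(v₁,…,v_d))` of the rewrite rule -/
def rhs (d : ℕ) : Tm (Sig d) (Fin d) :=
  Tm.op (Sig.sig 0) (fun i => Tm.op (Sig.sig i.succ) (fun k => Tm.var k))

/-- the initial ground term `t₀ = σ₀(a₁,…,a_d)` -/
def t₀ (d : ℕ) : Tm (Sig d) PEmpty :=
  Tm.op (Sig.sig 0) (fun i => Tm.op (Sig.const i) (fun k => k.elim0))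


lemma rewriteRoot_sig0 {d : ℕ} (g : Fin d → Tm (Sig d) PEmpty) :
    Tm.rewriteRoot (lhs d) (rhs d) (Tm.op (Sig.sig 0) g)
      = Tm.op (Sig.sig 0) (fun i => Tm.op (Sig.sig i.succ) g) := by
  have hex : ∃ σ : Fin d → Tm (Sig d) PEmpty,
      Tm.op (Sig.sig 0) g = Tm.subst σ (lhs d) := ⟨g, rfl⟩
  unfold Tm.rewriteRoot
  rw [dif_pos hex]
  have hspec := Classical.choose_spec hex
  set σ' := Classical.choose hex with hσ'
  have : Tm.op (Sig.sig (0 : Fin (d+1))) g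
      = Tm.op (Sig.sig (0 : Fin (d+1))) (fun i => σ' i) := hspec
  have hg : g = fun i => σ' i := by
    injection this with h1 h2
  simp only [rhs, Tm.subst, ← hg]

theorem dynamical_system_embeds_as_rewriting_model' (d : ℕ) (X : Type)
    (G : (Fin d → X) → (Fin d → X)) (f : (Fin d → X) → X) (x₀ : Fin d → X) :
    ∀ n : ℕ, ∃ g : Fin d → Tm (Sig d) PEmpty,
      (Tm.rewriteRoot (lhs d) (rhs d))^[n] (t₀ d) = Tm.op (Sig.sig 0) g ∧
      ∀ i, Tm.cata (dynAlg G f x₀) (g i) = G^[n] x₀ i := by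
  intro n
  induction n with
  | zero =>
    refine ⟨fun i => Tm.op (Sig.const i) (fun k => k.elim0), rfl, fun i => rfl⟩
  | succ n ih =>
    obtain ⟨g, hg, hc⟩ := ih
    refine ⟨fun i => Tm.op (Sig.sig i.succ) g, ?_, fun i => ?_⟩
    · rw [Function.iterate_succ_apply', hg, rewriteRoot_sig0]
    · show dynAlg G f x₀ d (Sig.sig i.succ) (fun k => Tm.cata _ (g k)) = _
      have : (fun k => Tm.cata (dynAlg G f x₀) (g k)) = G^[n] x₀ := funext hc
      rw [Function.iterate_succ_apply']
      simp [dynAlg, this]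

/-- every cartesian dynamical system `(G, f, x₀)` on `X` embeds as a
rewriting model: with the above signature, rewrite rule `l ↦ r`, initial term `t₀` and
algebra structure, one has `cata(c)(R_ε^n(t₀)) = f(G^n(x₀))` for all `n`. -/
theorem dynamical_system_embeds_as_rewriting_model (d : ℕ) (X : Type)
    (G : (Fin d → X) → (Fin d → X)) (f : (Fin d → X) → X) (x₀ : Fin d → X) :
    ∀ n : ℕ,
      Tm.cata (dynAlg G f x₀) ((Tm.rewriteRoot (lhs d) (rhs d))^[n] (t₀ d))
        = f (G^[n] x₀) := by
  intro n
  obtain ⟨g, hg, hc⟩ := dynamical_system_embeds_as_rewriting_model' d X G f x₀ n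
  rw [hg]
  show dynAlg G f x₀ d (Sig.sig 0) (fun k => Tm.cata _ (g k)) = _
  have : (fun k => Tm.cata (dynAlg G f x₀) (g k)) = G^[n] x₀ := funext hc
  simp [dynAlg, this]
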